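/- Let w*, z* : [0,|Ω|] → [0,∞) be nonincreasing, locally absolutely continuous functions with w*(|Ω|) = z*(|Ω|) = 0. Let λ > 0, g* : [0,|Ω|] → [0,∞) integrable, and set W(s) = λ∫₀ˢ w*, Z(s) = λ∫₀ˢ z*, G(s) = ∫₀ˢ g*. Suppose for a.e. s ∈ (0,|Ω|): −(w*)'(s) ≤ C s^{−p̄'/N'} (G(s) − W(s))^{1/(p̄−1)} and −(z*)'(s) = C s^{−p̄'/N'} (G(s) − Z(s))^{1/(p̄−1)}, where C > 0, p̄ > 1, p̄' = p̄/(p̄−1), N' = N/(N−1), and the quantities inside the powers are nonnegative. Then ∫₀ˢ w*(σ)dσ ≤ ∫₀ˢ z*(σ)dσ for all s ∈ [0,|Ω|]. -/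

import Mathlib

open MeasureTheory Set

/-- Maximum-principle/contradiction argument at the heart of the elliptic comparison
theorem: the differential relations for `w*` and `z*` imply comparison of
concentrations `∫₀ˢ w* ≤ ∫₀ˢ z*`. -/
theorem stmt5 (A C pb pb' N' lam : ℝ) (hA : 0 < A) (hC : 0 < C) (hpb : 1 < pb)
    (hpb' : pb' = pb / (pb - 1)) (hlam : 0 < lam)
    (w z w' z' gstar : ℝ → ℝ)
    (hwmono : AntitoneOn w (Set.Icc 0 A)) (hzmono : AntitoneOn z (Set.Icc 0 A))
    (hwpos : ∀ s, 0 ≤ w s) (hzpos : ∀ s, 0 ≤ z s)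
    (hwA : w A = 0) (hzA : z A = 0)
    (hgint : IntegrableOn gstar (Set.Icc 0 A)) (hgpos : ∀ s, 0 ≤ gstar s)
    (hwAC : ∀ a b : ℝ, 0 < a → a ≤ b → b ≤ A → w b - w a = ∫ t in a..b, w' t)
    (hzAC : ∀ a b : ℝ, 0 < a → a ≤ b → b ≤ A → z b - z a = ∫ t in a..b, z' t)
    (W Z G : ℝ → ℝ)
    (hW : ∀ s, W s = lam * ∫ σ in (0:ℝ)..s, w σ)
    (hZ : ∀ s, Z s = lam * ∫ σ in (0:ℝ)..s, z σ)
    (hG : ∀ s, G s = ∫ σ in (0:ℝ)..s, gstar σ)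
    (hWpos : ∀ s ∈ Set.Ioo 0 A, 0 ≤ G s - W s)
    (hZpos : ∀ s ∈ Set.Ioo 0 A, 0 ≤ G s - Z s)
    (hwineq : ∀ᵐ s ∂(volume.restrict (Set.Ioo 0 A)),
      -(w' s) ≤ C * s ^ (-(pb' / N')) * (G s - W s) ^ (1 / (pb - 1)))
    (hzineq : ∀ᵐ s ∂(volume.restrict (Set.Ioo 0 A)),
      -(z' s) = C * s ^ (-(pb' / N')) * (G s - Z s) ^ (1 / (pb - 1))) :
    ∀ s ∈ Set.Icc 0 A, (∫ σ in (0:ℝ)..s, w σ) ≤ ∫ σ in (0:ℝ)..s, z σ := by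
  intro s hs
  by_contra hcon
  push_neg at hcon
  have hA' : (0:ℝ) ≤ A := hA.le
  have hq : 0 < 1 / (pb - 1) := by
    have : 0 < pb - 1 := by linarith
    positivity
  have huIcc : uIcc (0:ℝ) A = Icc 0 A := uIcc_of_le hA'
  have hwInt : IntervalIntegrable w volume 0 A := by
    apply AntitoneOn.intervalIntegrable; rwa [huIcc]
  have hzInt : IntervalIntegrable z volume 0 A := by
    apply AntitoneOn.intervalIntegrable; rwa [huIcc]
  have hgInt : IntervalIntegrable gstar volume 0 A :=
    (intervalIntegrable_iff_integrableOn_Icc_of_le hA').2 hgint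
  -- sub-interval integrability
  have hsubw : ∀ x y : ℝ, 0 ≤ x → x ≤ y → y ≤ A → IntervalIntegrable w volume x y := by
    intro x y hx hxy hyA
    exact hwInt.mono_set (by rw [uIcc_of_le hxy, huIcc]; exact Icc_subset_Icc hx hyA)
  have hsubz : ∀ x y : ℝ, 0 ≤ x → x ≤ y → y ≤ A → IntervalIntegrable z volume x y := by
    intro x y hx hxy hyA
    exact hzInt.mono_set (by rw [uIcc_of_le hxy, huIcc]; exact Icc_subset_Icc hx hyA)
  set H : ℝ → ℝ := fun t => (∫ σ in (0:ℝ)..t, w σ) - ∫ σ in (0:ℝ)..t, z σ with hHdef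
  have HC : ContinuousOn H (Icc 0 A) := by
    have h1 : ContinuousOn (fun t => ∫ σ in (0:ℝ)..t, w σ) (Icc 0 A) := by
      have := intervalIntegral.continuousOn_primitive_interval (μ := volume) (f := w)
        (a := 0) (b := A) (by rw [huIcc]; exact (intervalIntegrable_iff_integrableOn_Icc_of_le hA').1 hwInt)
      rwa [huIcc] at this
    have h2 : ContinuousOn (fun t => ∫ σ in (0:ℝ)..t, z σ) (Icc 0 A) := by
      have := intervalIntegral.continuousOn_primitive_interval (μ := volume) (f := z)
        (a := 0) (b := A) (by rw [huIcc]; exact (intervalIntegrable_iff_integrableOn_Icc_of_le hA').1 hzInt)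
      rwa [huIcc] at this
    exact h1.sub h2
  have hGc : ContinuousOn G (Icc 0 A) := by
    have heq : G = fun t => ∫ σ in (0:ℝ)..t, gstar σ := funext hG
    rw [heq]
    have := intervalIntegral.continuousOn_primitive_interval (μ := volume) (f := gstar)
      (a := 0) (b := A) (by rwa [huIcc])
    rwa [huIcc] at this
  have hZc : ContinuousOn Z (Icc 0 A) := by
    have heq : Z = fun t => lam * ∫ σ in (0:ℝ)..t, z σ := funext hZ
    rw [heq]
    apply continuousOn_const.mul
    have := intervalIntegral.continuousOn_primitive_interval (μ := volume) (f := z)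
      (a := 0) (b := A) (by rw [huIcc]; exact (intervalIntegrable_iff_integrableOn_Icc_of_le hA').1 hzInt)
    rwa [huIcc] at this
  have hH0 : H 0 = 0 := by simp [hHdef]
  -- difference of H values as interval integral of w - z
  have hHdiff : ∀ x y : ℝ, 0 ≤ x → x ≤ y → y ≤ A →
      H y - H x = ∫ t in x..y, (w t - z t) := by
    intro x y hx hxy hyA
    have hwi := hsubw x y hx hxy hyA
    have hzi := hsubz x y hx hxy hyA
    rw [intervalIntegral.integral_sub hwi hzi]
    have e1 : (∫ σ in (0:ℝ)..y, w σ) - (∫ σ in (0:ℝ)..x, w σ) = ∫ t in x..y, w t :=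
      intervalIntegral.integral_interval_sub_left (hsubw 0 y le_rfl (hx.trans hxy) hyA)
        (hsubw 0 x le_rfl hx (hxy.trans hyA))
    have e2 : (∫ σ in (0:ℝ)..y, z σ) - (∫ σ in (0:ℝ)..x, z σ) = ∫ t in x..y, z t :=
      intervalIntegral.integral_interval_sub_left (hsubz 0 y le_rfl (hx.trans hxy) hyA)
        (hsubz 0 x le_rfl hx (hxy.trans hyA))
    simp only [hHdef]
    linarith [e1, e2]
  have hane : ∀ c : ℝ, ∀ᵐ t ∂(volume : Measure ℝ), t ≠ c := by
    intro c
    rw [ae_iff]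
    simpa using measure_singleton (α := ℝ) c
  -- THE KEY MONOTONICITY LEMMA
  have key : ∀ x y : ℝ, 0 < x → x ≤ y → y ≤ A →
      (∀ t, x < t → t < y → 0 ≤ H t) →
      w x - z x ≤ w y - z y := by
    intro x y hx hxy hyA hHpos
    have hxA : x ≤ A := hxy.trans hyA
    -- master a.e. statement on restrict (Icc x y)
    have hae : ∀ᵐ t ∂(volume.restrict (Icc x y)),
        z' t ≤ w' t ∧ z' t = -(C * t ^ (-(pb' / N')) * (G t - Z t) ^ (1 / (pb - 1))) := by
      have h1 : ∀ᵐ t ∂(volume : Measure ℝ), t ∈ Ioo 0 A →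
          -(w' t) ≤ C * t ^ (-(pb' / N')) * (G t - W t) ^ (1 / (pb - 1)) :=
        (ae_restrict_iff' measurableSet_Ioo).1 hwineq
      have h2 : ∀ᵐ t ∂(volume : Measure ℝ), t ∈ Ioo 0 A →
          -(z' t) = C * t ^ (-(pb' / N')) * (G t - Z t) ^ (1 / (pb - 1)) :=
        (ae_restrict_iff' measurableSet_Ioo).1 hzineq
      filter_upwards [ae_restrict_of_ae h1, ae_restrict_of_ae h2,
        ae_restrict_of_ae (hane x), ae_restrict_of_ae (hane y), ae_restrict_of_ae (hane A),
        ae_restrict_mem measurableSet_Icc] with t h1 h2 hnex hney hneA hmem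
      have htx : x < t := lt_of_le_of_ne hmem.1 (Ne.symm hnex)
      have hty : t < y := lt_of_le_of_ne hmem.2 hney
      have htIoo : t ∈ Ioo 0 A := ⟨hx.trans htx, lt_of_le_of_ne (hty.le.trans hyA) hneA⟩
      have hHt := hHpos t htx hty
      have hZW : Z t ≤ W t := by
        rw [hZ, hW]
        have : (∫ σ in (0:ℝ)..t, z σ) ≤ ∫ σ in (0:ℝ)..t, w σ := by
          simp only [hHdef] at hHt; linarith
        nlinarith
      have hphi : 0 ≤ C * t ^ (-(pb' / N')) :=
        mul_nonneg hC.le (Real.rpow_nonneg htIoo.1.le _)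
      have hzw : C * t ^ (-(pb' / N')) * (G t - W t) ^ (1 / (pb - 1)) ≤
          C * t ^ (-(pb' / N')) * (G t - Z t) ^ (1 / (pb - 1)) := by
        apply mul_le_mul_of_nonneg_left _ hphi
        exact Real.rpow_le_rpow (hWpos t htIoo) (by linarith) hq.le
      have h2' := h2 htIoo
      refine ⟨?_, by linarith⟩
      have h1' := h1 htIoo
      linarith
    -- z' is interval integrable on [x, y]
    have hz'int : IntervalIntegrable z' volume x y := by
      have hcont : ContinuousOn
          (fun t : ℝ => -(C * t ^ (-(pb' / N')) * (G t - Z t) ^ (1 / (pb - 1)))) (Icc x y) := by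
        have hc1 : ContinuousOn (fun t : ℝ => t ^ (-(pb' / N'))) (Icc x y) := fun t ht =>
          (Real.continuousAt_rpow_const t _ (Or.inl (ne_of_gt (lt_of_lt_of_le hx ht.1)))).continuousWithinAt
        have hc2 : ContinuousOn (fun t => G t - Z t) (Icc x y) :=
          (hGc.sub hZc).mono (Icc_subset_Icc hx.le hyA)
        exact ((continuousOn_const.mul hc1).mul (hc2.rpow_const fun t _ => Or.inr hq.le)).neg
      have hψint : IntervalIntegrable
          (fun t : ℝ => -(C * t ^ (-(pb' / N')) * (G t - Z t) ^ (1 / (pb - 1)))) volume x y := by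
        apply ContinuousOn.intervalIntegrable; rwa [uIcc_of_le hxy]
      apply hψint.congr_ae
      rw [uIoc_of_le hxy]
      have := ae_restrict_of_ae_restrict_of_subset Ioc_subset_Icc_self hae
      exact this.mono fun t ht => ht.2.symm
    have hweq := hwAC x y hx hxy hyA
    have hzeq := hzAC x y hx hxy hyA
    by_cases hw'int : IntervalIntegrable w' volume x y
    · have hmono := intervalIntegral.integral_mono_ae_restrict hxy hz'int hw'int
        (hae.mono fun t ht => ht.1)
      linarith
    · have h0 : (∫ t in x..y, w' t) = 0 := intervalIntegral.integral_undef hw'int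
      have hzmono' : z y ≤ z x := hzmono ⟨hx.le, hxA⟩ ⟨hx.le.trans hxy, hyA⟩ hxy
      linarith
  -- maximum point
  obtain ⟨s₀, hs₀mem, hs₀max⟩ := isCompact_Icc.exists_isMaxOn (nonempty_Icc.2 hA') HC
  have hmax : ∀ t ∈ Icc 0 A, H t ≤ H s₀ := hs₀max
  have hHs : 0 < H s := sub_pos.2 hcon
  have hHs₀ : 0 < H s₀ := hHs.trans_le (hmax s hs)
  have hs₀A : s₀ ≤ A := hs₀mem.2
  -- the last zero of H before s₀
  set S := Icc 0 s₀ ∩ H ⁻¹' (Iic 0) with hSdef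
  have hScl : IsClosed S :=
    (HC.mono (Icc_subset_Icc le_rfl hs₀A)).preimage_isClosed_of_isClosed isClosed_Icc isClosed_Iic
  have hSne : S.Nonempty := ⟨0, ⟨le_rfl, hs₀mem.1⟩, by simp [hH0]⟩
  have hScomp : IsCompact S := isCompact_Icc.of_isClosed_subset hScl inter_subset_left
  have hamem : sSup S ∈ S := hScomp.sSup_mem hSne
  set a := sSup S with hadef
  have ha0 : 0 ≤ a := hamem.1.1
  have haH : H a ≤ 0 := hamem.2
  have has₀ : a < s₀ := lt_of_le_of_ne hamem.1.2 (fun h => by rw [h] at haH; linarith)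
  have hHpos : ∀ t, a < t → t ≤ s₀ → 0 < H t := by
    intro t hat hts₀
    by_contra hle
    push_neg at hle
    have : t ∈ S := ⟨⟨ha0.trans hat.le, hts₀⟩, hle⟩
    exact absurd (le_csSup (isCompact_Icc.bddAbove.mono inter_subset_left) this) (not_le.2 hat)
  -- u(s₀) := w s₀ - z s₀ is positive
  have huint : IntervalIntegrable (fun t => w t - z t) volume a s₀ :=
    (hsubw a s₀ ha0 has₀.le hs₀A).sub (hsubz a s₀ ha0 has₀.le hs₀A)
  have hbound : ∫ t in a..s₀, (w t - z t) ≤ (s₀ - a) * (w s₀ - z s₀) := by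
    have hm := intervalIntegral.integral_mono_ae_restrict has₀.le huint
      (intervalIntegrable_const (c := w s₀ - z s₀)) ?_
    · rw [intervalIntegral.integral_const, smul_eq_mul] at hm
      exact hm
    · filter_upwards [ae_restrict_mem measurableSet_Icc, ae_restrict_of_ae (hane a)]
        with t hmem hnea
      have hat : a < t := lt_of_le_of_ne hmem.1 (Ne.symm hnea)
      exact key t s₀ (ha0.trans_lt hat) hmem.2 hs₀A
        (fun r h1 h2 => (hHpos r (hat.trans h1) h2.le).le)
  have hus₀ : 0 < w s₀ - z s₀ := by
    have heq := hHdiff a s₀ ha0 has₀.le hs₀A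
    nlinarith
  rcases eq_or_lt_of_le hs₀A with hEq | hlt
  · rw [hEq, hwA, hzA] at hus₀; linarith
  · -- s₀ < A : push past the maximum
    have hcw : ContinuousWithinAt H (Icc 0 A) s₀ := HC s₀ hs₀mem
    have hev : ∀ᶠ t in nhdsWithin s₀ (Icc 0 A), 0 < H t :=
      hcw.eventually (eventually_gt_nhds hHs₀)
    rw [Filter.eventually_iff, Metric.mem_nhdsWithin_iff] at hev
    obtain ⟨δ, hδ, hball⟩ := hev
    set s1 := min (s₀ + δ / 2) A with hs1def
    have hs₀s1 : s₀ < s1 := lt_min (by linarith) hlt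
    have hs1A : s1 ≤ A := min_le_right _ _
    have hs1mem : s1 ∈ Icc 0 A := ⟨hs₀mem.1.trans hs₀s1.le, hs1A⟩
    have hs₀0 : 0 < s₀ := ha0.trans_lt has₀
    have hH01 : ∀ t, s₀ ≤ t → t ≤ s1 → 0 < H t := by
      intro t h1 h2
      have hd : t ∈ Metric.ball s₀ δ := by
        rw [Metric.mem_ball, Real.dist_eq, abs_of_nonneg (by linarith)]
        have : t ≤ s₀ + δ / 2 := h2.trans (min_le_left _ _)
        linarith
      exact hball ⟨hd, hs₀mem.1.trans h1, h2.trans hs1A⟩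
    have huint2 : IntervalIntegrable (fun t => w t - z t) volume s₀ s1 :=
      (hsubw s₀ s1 hs₀0.le hs₀s1.le hs1A).sub (hsubz s₀ s1 hs₀0.le hs₀s1.le hs1A)
    have hbound2 : (s1 - s₀) * (w s₀ - z s₀) ≤ ∫ t in s₀..s1, (w t - z t) := by
      have hm := intervalIntegral.integral_mono_on hs₀s1.le
        (intervalIntegrable_const (c := w s₀ - z s₀)) huint2 ?_
      · rw [intervalIntegral.integral_const, smul_eq_mul] at hm
        exact hm
      · intro t ht
        exact key s₀ t hs₀0 ht.1 (ht.2.trans hs1A)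
          (fun r h1 h2 => (hH01 r h1.le (h2.le.trans ht.2)).le)
    have heq2 := hHdiff s₀ s1 hs₀0.le hs₀s1.le hs1A
    have : H s₀ < H s1 := by nlinarith
    exact absurd (hmax s1 hs1mem) (not_le.2 this)
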